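/- arXiv:2208.07809 — 2 statements merged into one kernel-verified Lean document; each statement's English description precedes it below -/
import Mathlib

section
/- Let x, y, z ∈ W with x, y ∈ W^×. Suppose there exist integers r, s ≥ 0 and elements a, b, c, d, g, h, α, β, Q, R, S, T ∈ W satisfying: σ²(α) = α; p(σ²(β) − β) = pʳx; a(σ(α) + pcβ) = σ⁻¹(β) + pʳb + cα; a = c; σ²(Q) − Q = yσ(β); p(σ²(R) − R) = yσ(α) + pʳz; σ²(S) = S; p(σ²(T) − T) = pˢy; a = h; a(σ(S) + paT) = σ⁻¹(T) + pˢg + aS; and a(σ⁻¹(Q) + pgβ + paR) = σ⁻¹(R) + gα + pʳd + aQ. Then the reductions x̄, ȳ ∈ k are linearly dependent over the subfield 𝔽_{p²} of k; equivalently (since x̄ and ȳ are nonzero), x̄^{p²}·ȳ = x̄·ȳ^{p²}. -/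
set_option maxHeartbeats 1000000


noncomputable section

open Pointwise

/-- `k`, an algebraic closure of the field `𝔽_p` with `p` elements. -/
abbrev Kbar (p : ℕ) [Fact p.Prime] : Type _ := AlgebraicClosure (ZMod p)

/-- `W = W(k)`, the ring of Witt vectors with coefficients in `k`. -/
abbrev Wt (p : ℕ) [Fact p.Prime] : Type _ := WittVector p (Kbar p)

/-- `σ : W → W`, the Witt vector Frobenius automorphism, lifting the `p`-th power map on `k`. -/
def σW (p : ℕ) [Fact p.Prime] : Wt p ≃+* Wt p := WittVector.frobeniusEquiv p (Kbar p)

namespace St16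
variable (p : ℕ) [Fact p.Prime]

/-- reduction mod p -/
def red : Wt p →+* Kbar p := WittVector.constantCoeff

lemma red_σ (w : Wt p) : red p (σW p w) = (red p w) ^ p := by
  simp [σW, red, WittVector.frobeniusEquiv_apply, WittVector.constantCoeff]

lemma red_p : red p (p : Wt p) = 0 := by
  rw [map_natCast]; exact CharP.cast_eq_zero _ p

/-- iterated Frobenius -/
def σn (n : ℕ) (w : Wt p) : Wt p := (⇑(σW p))^[n] w

lemma σn_zero (w : Wt p) : σn p 0 w = w := rfl
lemma σn_succ (n : ℕ) (w : Wt p) : σn p (n+1) w = σn p n (σW p w) :=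
  Function.iterate_succ_apply _ _ _
lemma σn_succ' (n : ℕ) (w : Wt p) : σn p (n+1) w = σW p (σn p n w) :=
  Function.iterate_succ_apply' _ _ _
lemma σn_σ (n : ℕ) (w : Wt p) : σn p n (σW p w) = σW p (σn p n w) := by
  rw [← σn_succ, σn_succ']

lemma σn_mul (n : ℕ) (x y : Wt p) : σn p n (x * y) = σn p n x * σn p n y := by
  induction n with
  | zero => rfl
  | succ n ih => simp only [σn_succ', ih, map_mul]

lemma σn_addh (n : ℕ) (x y : Wt p) : σn p n (x + y) = σn p n x + σn p n y := by
  induction n with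
  | zero => rfl
  | succ n ih => simp only [σn_succ', ih, map_add]

lemma σn_subh (n : ℕ) (x y : Wt p) : σn p n (x - y) = σn p n x - σn p n y := by
  induction n with
  | zero => rfl
  | succ n ih => simp only [σn_succ', ih, map_sub]

lemma σn_natCast (n m : ℕ) : σn p n (m : Wt p) = m := by
  induction n with
  | zero => rfl
  | succ n ih => simp only [σn_succ', ih, map_natCast]

lemma σn_pow (n k : ℕ) (x : Wt p) : σn p n (x ^ k) = (σn p n x) ^ k := by
  induction n with
  | zero => rfl
  | succ n ih => simp only [σn_succ', ih, map_pow]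

lemma σn_zeroval (n : ℕ) : σn p n (0 : Wt p) = 0 := by
  induction n with
  | zero => rfl
  | succ n ih => simp only [σn_succ', ih, map_zero]

/-- E = σ² - id -/
def Ew (w : Wt p) : Wt p := σW p (σW p w) - w

lemma Ew_add (x y : Wt p) : Ew p (x + y) = Ew p x + Ew p y := by
  simp only [Ew, map_add]; ring

lemma Ew_pmul (m : ℕ) (x : Wt p) : Ew p ((p:Wt p)^m * x) = (p:Wt p)^m * Ew p x := by
  simp only [Ew, map_mul, map_pow, map_natCast]; ring

lemma Ew_sum {ι : Type*} (s : Finset ι) (f : ι → Wt p) :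
    Ew p (∑ i ∈ s, f i) = ∑ i ∈ s, Ew p (f i) := by
  simp only [Ew, map_sum]
  rw [← Finset.sum_sub_distrib]

lemma red_Ew (w : Wt p) : red p (Ew p w) = (red p w) ^ (p * p) - red p w := by
  simp only [Ew, map_sub, red_σ, ← pow_mul]

/-- products in the iteration -/
def Cs (a : Wt p) (n : ℕ) : Wt p := ∏ i ∈ Finset.range n, (σn p (i+1) a)^2
def Ps (a : Wt p) (n : ℕ) : Wt p := Cs p a n * σn p (n+1) a

lemma Cs_zero (a : Wt p) : Cs p a 0 = 1 := by simp [Cs]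
lemma Cs_succ (a : Wt p) (n : ℕ) : Cs p a (n+1) = Cs p a n * (σn p (n+1) a)^2 :=
  Finset.prod_range_succ _ _

/-- σ²-invariance of σn, Cs, Ps when σ²a = a -/
lemma σ2_σn (a : Wt p) (ha : σW p (σW p a) = a) (n : ℕ) :
    σW p (σW p (σn p n a)) = σn p n a := by
  rw [← σn_σ, ← σn_σ, ha]

lemma σ2_Cs (a : Wt p) (ha : σW p (σW p a) = a) (n : ℕ) :
    σW p (σW p (Cs p a n)) = Cs p a n := by
  induction n with
  | zero => simp [Cs_zero]
  | succ n ih => rw [Cs_succ, map_mul, map_mul, ih, map_pow, map_pow, σ2_σn p a ha]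

lemma σ2_Ps (a : Wt p) (ha : σW p (σW p a) = a) (n : ℕ) :
    σW p (σW p (Ps p a n)) = Ps p a n := by
  rw [Ps, map_mul, map_mul, σ2_Cs p a ha, σ2_σn p a ha]

lemma Ew_inv (w : Wt p) (hw : σW p (σW p w) = w) : Ew p w = 0 := by
  simp [Ew, hw]

/-- divisibility transfer -/
lemma dvd_mul_sub (c x x' y y' : Wt p) (hx : c ∣ x - x') (hy : c ∣ y - y') :
    c ∣ x * y - x' * y' := by
  have h : x * y - x' * y' = x * (y - y') + (x - x') * y' := by ring
  rw [h]; exact dvd_add (hy.mul_left x) (hx.mul_right y')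

lemma σn_dvd (m : ℕ) (w v : Wt p) (h : (p:Wt p)^m ∣ w - v) (n : ℕ) :
    (p:Wt p)^m ∣ σn p n w - σn p n v := by
  obtain ⟨t, ht⟩ := h
  refine ⟨σn p n t, ?_⟩
  rw [← σn_subh, ht, σn_mul, σn_pow, σn_natCast]

lemma Cs_dvd (m : ℕ) (a a' : Wt p) (h : (p:Wt p)^m ∣ a - a') (n : ℕ) :
    (p:Wt p)^m ∣ Cs p a n - Cs p a' n := by
  induction n with
  | zero => simp [Cs_zero]
  | succ n ih =>
      rw [Cs_succ, Cs_succ, pow_two, pow_two]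
      exact dvd_mul_sub p _ _ _ _ _ ih
        (dvd_mul_sub p _ _ _ _ _ (σn_dvd p m a a' h (n+1)) (σn_dvd p m a a' h (n+1)))

lemma Ps_dvd (m : ℕ) (a a' : Wt p) (h : (p:Wt p)^m ∣ a - a') (n : ℕ) :
    (p:Wt p)^m ∣ Ps p a n - Ps p a' n :=
  dvd_mul_sub p _ _ _ _ _ (Cs_dvd p m a a' h n) (σn_dvd p m a a' h (n+1))


/-- Unfolding the fixed-point equation K times. -/
lemma unfold (a u β f : Wt p)
    (hβ : β = σW p a * u + (p : Wt p) * (σW p a)^2 * σW p β + f) (K : ℕ) :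
    β = (∑ n ∈ Finset.range K,
          (p:Wt p)^n * (Ps p a n * σn p n u + Cs p a n * σn p n f))
        + (p:Wt p)^K * Cs p a K * σn p K β := by
  induction K with
  | zero => simp [Cs_zero, σn_zero]
  | succ K ih =>
      have hK : σn p K β
          = σn p (K+1) a * σn p K u + (p:Wt p) * (σn p (K+1) a)^2 * σn p (K+1) β
            + σn p K f := by
        conv_lhs => rw [hβ]
        rw [σn_addh, σn_addh, σn_mul, σn_mul, σn_mul, σn_pow, σn_natCast]
        simp only [σn_σ]
        simp only [← σn_succ']
      rw [Finset.sum_range_succ]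
      calc β = (∑ n ∈ Finset.range K,
            (p:Wt p)^n * (Ps p a n * σn p n u + Cs p a n * σn p n f))
          + (p:Wt p)^K * Cs p a K * σn p K β := ih
        _ = _ := by
            rw [hK, Cs_succ, Ps]
            ring

/-- Expansion of E β. -/
lemma expand (a u β f : Wt p) (r : ℕ)
    (hu : σW p (σW p u) = u)
    (hβ : β = σW p a * u + (p : Wt p) * (σW p a)^2 * σW p β + (p:Wt p)^r * f) :
    ∃ J : Wt p, Ew p β
      = (∑ n ∈ Finset.range (r+1), (p:Wt p)^n * (Ew p (Ps p a n) * σn p n u))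
        + (p:Wt p)^r * J := by
  have hun : ∀ n, σW p (σW p (σn p n u)) = σn p n u := fun n => by
    rw [← σn_σ, ← σn_σ, hu]
  have h := unfold p a u β ((p:Wt p)^r * f) hβ (r+1)
  have hE := congrArg (Ew p) h
  rw [Ew_add, Ew_sum] at hE
  refine ⟨(∑ n ∈ Finset.range (r+1), (p:Wt p)^n * (Ew p (Cs p a n * σn p n f)))
    + (p:Wt p) * Ew p (Cs p a (r+1) * σn p (r+1) β), ?_⟩
  rw [hE]
  have hterm : ∀ n ∈ Finset.range (r+1),
      Ew p ((p:Wt p)^n * (Ps p a n * σn p n u + Cs p a n * σn p n ((p:Wt p)^r * f)))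
      = (p:Wt p)^n * (Ew p (Ps p a n) * σn p n u)
        + (p:Wt p)^r * ((p:Wt p)^n * (Ew p (Cs p a n * σn p n f))) := by
    intro n _
    have h1 : σn p n ((p:Wt p)^r * f) = (p:Wt p)^r * σn p n f := by
      rw [σn_mul, σn_pow, σn_natCast]
    have h2 : Ew p (Ps p a n * σn p n u) = Ew p (Ps p a n) * σn p n u := by
      simp only [Ew, map_mul, hun n]; ring
    rw [h1, Ew_pmul]
    have h3 : Ps p a n * σn p n u + Cs p a n * ((p:Wt p)^r * σn p n f)
        = (Ps p a n * σn p n u) + (p:Wt p)^r * (Cs p a n * σn p n f) := by ring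
    rw [h3, Ew_add, Ew_pmul, h2]
    ring
  rw [Finset.sum_congr rfl hterm, Finset.sum_add_distrib, ← Finset.mul_sum]
  have h4 : Ew p ((p:Wt p)^(r+1) * Cs p a (r+1) * σn p (r+1) β)
      = (p:Wt p)^r * ((p:Wt p) * Ew p (Cs p a (r+1) * σn p (r+1) β)) := by
    rw [mul_assoc, Ew_pmul, pow_succ]
    ring
  rw [h4]
  ring


lemma p_pow_ne_zero (m : ℕ) : ((p:Wt p))^m ≠ 0 :=
  pow_ne_zero _ (WittVector.p_nonzero p (Kbar p))

/-- cancellation of p-powers against elements with nonzero reduction -/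
lemma cancel_aux (c k : ℕ) (A B : Wt p) (hA : red p A ≠ 0)
    (h : (p:Wt p)^c * A = (p:Wt p)^(c+k) * B) : A = B := by
  rw [pow_add, mul_assoc] at h
  have h2 : A = (p:Wt p)^k * B := mul_left_cancel₀ (p_pow_ne_zero p c) h
  rcases Nat.eq_zero_or_pos k with hk | hk
  · rw [hk, pow_zero, one_mul] at h2; exact h2
  · exfalso
    apply hA
    rw [h2, map_mul, map_pow, red_p, zero_pow (Nat.pos_iff_ne_zero.mp hk), zero_mul]

lemma cancel_pow (c d : ℕ) (A B : Wt p) (hA : red p A ≠ 0) (hB : red p B ≠ 0)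
    (h : (p:Wt p)^c * A = (p:Wt p)^d * B) : A = B := by
  rcases le_total c d with hcd | hcd
  · obtain ⟨k, rfl⟩ : ∃ k, d = c + k := ⟨d - c, (Nat.add_sub_cancel' hcd).symm⟩
    exact cancel_aux p c k A B hA h
  · obtain ⟨k, rfl⟩ : ∃ k, c = d + k := ⟨c - d, (Nat.add_sub_cancel' hcd).symm⟩
    exact (cancel_aux p d k B A hB h.symm).symm

lemma pdvd_of_red_zero (w : Wt p) (h : red p w = 0) : ∃ w', w = (p:Wt p) * w' := by
  by_cases hw : w = 0
  · exact ⟨0, by simp [hw]⟩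
  · obtain ⟨m, b, hb, hw'⟩ := WittVector.exists_eq_pow_p_mul w hw
    cases m with
    | zero =>
        exfalso
        apply hb
        rw [pow_zero, one_mul] at hw'
        rw [← WittVector.constantCoeff_apply, ← hw']
        exact h
    | succ n => exact ⟨(p:Wt p)^n * b, by rw [hw', pow_succ]; ring⟩

/-- Case σ²a = a : contradiction. -/
lemma coreB (a u β f x : Wt p) (r' : ℕ)
    (ha : σW p (σW p a) = a) (hu : σW p (σW p u) = u)
    (hβ : β = σW p a * u + (p : Wt p) * (σW p a)^2 * σW p β + (p:Wt p)^(r'+1) * f)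
    (hEβ : Ew p β = (p:Wt p)^r' * x)
    (hx : red p x ≠ 0) : False := by
  obtain ⟨J, hJ⟩ := expand p a u β f (r'+1) hu hβ
  have hzero : ∀ n ∈ Finset.range (r'+2), (p:Wt p)^n * (Ew p (Ps p a n) * σn p n u) = 0 := by
    intro n _
    rw [Ew_inv p _ (σ2_Ps p a ha n), zero_mul, mul_zero]
  rw [Finset.sum_congr rfl hzero, Finset.sum_const_zero, zero_add] at hJ
  rw [hEβ] at hJ
  have h2 : (p:Wt p)^r' * x = (p:Wt p)^r' * ((p:Wt p) * J) := by
    rw [hJ, pow_succ]; ring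
  have h3 : x = (p:Wt p) * J := mul_left_cancel₀ (p_pow_ne_zero p r') h2
  apply hx
  rw [h3, map_mul, red_p, zero_mul]

/-- Main computation: the reduction of x is ((ē)^{p²} - ē)^p times an 𝔽_{p²}-element. -/
lemma coreA (a astar e : Wt p) (m : ℕ)
    (hstar : σW p (σW p astar) = astar)
    (ha : a = astar + (p:Wt p)^m * e)
    (u β f x : Wt p) (r' : ℕ)
    (hu : σW p (σW p u) = u)
    (hβ : β = σW p a * u + (p : Wt p) * (σW p a)^2 * σW p β + (p:Wt p)^(r'+1) * f)
    (hEβ : Ew p β = (p:Wt p)^r' * x)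
    (hx : red p x ≠ 0)
    (he : (red p e)^(p*p) ≠ red p e) :
    ∃ t : Kbar p, t^(p*p) = t ∧
      red p x = ((red p e)^(p*p) - red p e)^p * t := by
  obtain ⟨J, hJ⟩ := expand p a u β f (r'+1) hu hβ
  have hdvd : ∀ n, (p:Wt p)^m ∣ Ps p a n - Ps p astar n :=
    fun n => Ps_dvd p m a astar ⟨e, by rw [ha]; ring⟩ n
  choose Qf hQf using hdvd
  have hEP : ∀ n, Ew p (Ps p a n) = (p:Wt p)^m * Ew p (Qf n) := by
    intro n
    have h1 : Ps p a n = Ps p astar n + (p:Wt p)^m * Qf n := by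
      have := hQf n; linear_combination this
    rw [h1, Ew_add, Ew_pmul, Ew_inv p _ (σ2_Ps p astar hstar n), zero_add]
  -- u ≠ 0
  by_cases hu0 : u = 0
  · exfalso
    have hzero : ∀ n ∈ Finset.range (r'+2), (p:Wt p)^n * (Ew p (Ps p a n) * σn p n u) = 0 := by
      intro n _
      rw [hu0, σn_zeroval, mul_zero, mul_zero]
    rw [Finset.sum_congr rfl hzero, Finset.sum_const_zero, zero_add, hEβ] at hJ
    have h2 : (p:Wt p)^r' * x = (p:Wt p)^r' * ((p:Wt p) * J) := by
      rw [hJ, pow_succ]; ring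
    have h3 : x = (p:Wt p) * J := mul_left_cancel₀ (p_pow_ne_zero p r') h2
    apply hx
    rw [h3, map_mul, red_p, zero_mul]
  obtain ⟨i, u₀, hu₀c, huu⟩ := WittVector.exists_eq_pow_p_mul u hu0
  have hu₀ : red p u₀ ≠ 0 := by
    rw [red, WittVector.constantCoeff_apply]; exact hu₀c
  have hσu₀ : σW p (σW p u₀) = u₀ := by
    have h4 := hu
    rw [huu, map_mul, map_mul, map_pow, map_pow, map_natCast, map_natCast] at h4
    exact mul_left_cancel₀ (p_pow_ne_zero p i) h4
  -- rewrite the sum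
  have hterm : ∀ n ∈ Finset.range (r'+2),
      (p:Wt p)^n * (Ew p (Ps p a n) * σn p n u)
      = (p:Wt p)^(m+i) * ((p:Wt p)^n * (Ew p (Qf n) * σn p n u₀)) := by
    intro n _
    rw [hEP n, huu, σn_mul, σn_pow, σn_natCast]
    ring
  rw [Finset.sum_congr rfl hterm, ← Finset.mul_sum, Finset.sum_range_succ'] at hJ
  set η : Wt p := (∑ n ∈ Finset.range (r'+1),
      (p:Wt p)^(n+1) * (Ew p (Qf (n+1)) * σn p (n+1) u₀))
      + (p:Wt p)^0 * (Ew p (Qf 0) * σn p 0 u₀) with hηdef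
  -- Qf 0 = σ e
  have hQ0 : Qf 0 = σW p e := by
    have h5 := hQf 0
    have h6 : Ps p a 0 - Ps p astar 0 = (p:Wt p)^m * σW p e := by
      rw [Ps, Ps, Cs_zero, Cs_zero, one_mul, one_mul, σn_succ', σn_succ', σn_zero, σn_zero,
        ← map_sub, ha]
      rw [show astar + (p:Wt p)^m * e - astar = (p:Wt p)^m * e by ring]
      rw [map_mul, map_pow, map_natCast]
    have h7 := h6.symm.trans h5
    exact (mul_left_cancel₀ (p_pow_ne_zero p m) h7).symm
  have hredEQ0 : red p (Ew p (Qf 0)) = ((red p e)^(p*p) - red p e)^p := by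
    rw [hQ0]
    have h7 : Ew p (σW p e) = σW p (Ew p e) := by
      rw [Ew, Ew, map_sub]
    rw [h7, red_σ, red_Ew]
  have hredη : red p η = ((red p e)^(p*p) - red p e)^p * red p u₀ := by
    rw [hηdef, map_add, map_sum, Finset.sum_eq_zero, zero_add, pow_zero, one_mul, σn_zero,
      map_mul, hredEQ0]
    intro n _
    rw [map_mul, map_pow, red_p, zero_pow (Nat.succ_ne_zero n), zero_mul]
  have hredη' : red p η ≠ 0 :=
    hredη ▸ mul_ne_zero (pow_ne_zero _ (sub_ne_zero_of_ne he)) hu₀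
  -- final comparison
  rw [hEβ] at hJ
  have hcomp : (p:Wt p)^r' * (x - (p:Wt p) * J) = (p:Wt p)^(m+i) * η := by
    rw [pow_succ] at hJ
    linear_combination hJ
  have hredxJ : red p (x - (p:Wt p) * J) = red p x := by
    rw [map_sub, map_mul, red_p, zero_mul, sub_zero]
  have hxη : x - (p:Wt p) * J = η :=
    cancel_pow p r' (m+i) _ _ (by rw [hredxJ]; exact hx) hredη' hcomp
  refine ⟨red p u₀, ?_, ?_⟩
  · have h8 := congrArg (red p) hσu₀
    rw [red_σ, red_σ, ← pow_mul] at h8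
    exact h8
  · rw [← hredη, ← hxη, hredxJ]

lemma red_teich (t : Kbar p) : red p (WittVector.teichmuller p t) = t := by
  rw [red, WittVector.constantCoeff_apply]
  exact WittVector.teichmuller_coeff_zero p t

lemma σ_teich (t : Kbar p) :
    σW p (WittVector.teichmuller p t) = WittVector.teichmuller p (t^p) := by
  have h0 : σW p (WittVector.teichmuller p t)
      = WittVector.frobenius (WittVector.teichmuller p t) := by
    rw [σW, WittVector.frobeniusEquiv_apply]
  rw [h0]
  apply WittVector.ext
  intro n
  rw [WittVector.coeff_frobenius_charP]
  cases n with
  | zero => rw [WittVector.teichmuller_coeff_zero, WittVector.teichmuller_coeff_zero]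
  | succ n =>
      rw [WittVector.teichmuller_coeff_pos _ _ _ (Nat.succ_pos n),
        WittVector.teichmuller_coeff_pos _ _ _ (Nat.succ_pos n),
        zero_pow (Fact.out (p := p.Prime)).ne_zero]

/-- Best approximation of `a` by a σ²-invariant element. -/
lemma decomp (a : Wt p) (hA : σW p (σW p a) ≠ a) :
    ∃ (astar e : Wt p) (m : ℕ), σW p (σW p astar) = astar ∧
      a = astar + (p:Wt p)^m * e ∧ (red p e)^(p*p) ≠ red p e := by
  classical
  have hEa : Ew p a ≠ 0 := fun h => hA (sub_eq_zero.mp h)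
  obtain ⟨t, ε, hε, hEeq⟩ := WittVector.exists_eq_pow_p_mul (Ew p a) hEa
  have hε' : red p ε ≠ 0 := by rw [red, WittVector.constantCoeff_apply]; exact hε
  set P : ℕ → Prop := fun m => ∃ w, σW p (σW p w) = w ∧ (p:Wt p)^m ∣ (a - w) with hPdef
  have hP0 : P 0 := ⟨0, by rw [map_zero, map_zero], by rw [pow_zero]; exact one_dvd _⟩
  have hbdd : ∀ m, P m → m ≤ t := by
    rintro m ⟨w, hw, c, hc⟩
    by_contra hmt
    push_neg at hmt
    have h1 : Ew p a = (p:Wt p)^m * Ew p c := by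
      have ha : a = w + (p:Wt p)^m * c := by linear_combination hc
      rw [ha, Ew_add, Ew_inv p w hw, zero_add, Ew_pmul]
    have h2 : (p:Wt p)^t * ε = (p:Wt p)^t * ((p:Wt p)^(m-t) * Ew p c) := by
      rw [← mul_assoc, ← pow_add]
      rw [show t + (m - t) = m from Nat.add_sub_cancel' hmt.le]
      rw [← h1, hEeq]
    have h3 : ε = (p:Wt p)^(m-t) * Ew p c := mul_left_cancel₀ (p_pow_ne_zero p t) h2
    apply hε'
    rw [h3, map_mul, map_pow, red_p, zero_pow (Nat.sub_ne_zero_of_lt hmt), zero_mul]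
  set m := Nat.findGreatest P t with hmdef
  have hPm : P m := Nat.findGreatest_spec (Nat.zero_le t) hP0
  have hnot : ¬ P (m+1) := by
    intro hP1
    exact Nat.findGreatest_is_greatest (Nat.lt_succ_self m) (hbdd _ hP1) hP1
  obtain ⟨astar, hstar, e, he⟩ := hPm
  refine ⟨astar, e, m, hstar, by linear_combination he, ?_⟩
  intro hfix
  apply hnot
  refine ⟨astar + (p:Wt p)^m * WittVector.teichmuller p (red p e), ?_, ?_⟩
  · rw [map_add, map_add, hstar, map_mul, map_mul, map_pow, map_pow, map_natCast, map_natCast,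
      σ_teich, σ_teich, ← pow_mul, hfix]
  · obtain ⟨w', hw'⟩ := pdvd_of_red_zero p (e - WittVector.teichmuller p (red p e))
      (by rw [map_sub, red_teich, sub_self])
    refine ⟨w', ?_⟩
    have : a - (astar + (p:Wt p)^m * WittVector.teichmuller p (red p e))
        = (p:Wt p)^m * (e - WittVector.teichmuller p (red p e)) := by
      linear_combination he
    rw [this, hw', pow_succ]
    ring

end St16

/-- the system of equations forces the reductions `x̄, ȳ ∈ k` to be linearly
dependent over `𝔽_{p²}`, i.e. (both being nonzero) `x̄^{p²}·ȳ = x̄·ȳ^{p²}`. Here the reduction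
modulo `p` of a Witt vector is its constant coefficient. -/
theorem statement16 (p : ℕ) [Fact p.Prime] (hp : Odd p)
    (x y z : Wt p) (hx : IsUnit x) (hy : IsUnit y)
    (r s : ℕ) (a b c d g h α β Q R S T : Wt p)
    (e1i : σW p (σW p α) = α)
    (e1ii : (p : Wt p) * (σW p (σW p β) - β) = (p : Wt p) ^ r * x)
    (e2i : a * (σW p α + (p : Wt p) * c * β) = (σW p).symm β + (p : Wt p) ^ r * b + c * α)
    (e2ii : a = c)
    (e3i : σW p (σW p Q) - Q = y * σW p β)
    (e3ii : (p : Wt p) * (σW p (σW p R) - R) = y * σW p α + (p : Wt p) ^ r * z)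
    (e3iii : σW p (σW p S) = S)
    (e3iv : (p : Wt p) * (σW p (σW p T) - T) = (p : Wt p) ^ s * y)
    (e4i : a = h)
    (e4ii : a * (σW p S + (p : Wt p) * a * T) = (σW p).symm T + (p : Wt p) ^ s * g + a * S)
    (e4iii : a * ((σW p).symm Q + (p : Wt p) * g * β + (p : Wt p) * a * R)
      = (σW p).symm R + g * α + (p : Wt p) ^ r * d + a * Q) :
    (WittVector.constantCoeff x) ^ (p ^ 2) * WittVector.constantCoeff y
      = WittVector.constantCoeff x * (WittVector.constantCoeff y) ^ (p ^ 2) := by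
  classical
  subst e2ii
  open St16 in
  have hxr : red p x ≠ 0 := (hx.map (red p)).ne_zero
  have hyr : red p y ≠ 0 := (hy.map (red p)).ne_zero
  -- r and s are positive
  have hr0 : r ≠ 0 := by
    rintro rfl
    rw [pow_zero, one_mul] at e1ii
    apply hxr
    rw [← e1ii, map_mul, red_p, zero_mul]
  have hs0 : s ≠ 0 := by
    rintro rfl
    rw [pow_zero, one_mul] at e3iv
    apply hyr
    rw [← e3iv, map_mul, red_p, zero_mul]
  obtain ⟨r', rfl⟩ := Nat.exists_eq_succ_of_ne_zero hr0
  obtain ⟨s', rfl⟩ := Nat.exists_eq_succ_of_ne_zero hs0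
  -- divided E-equations
  have hEβ : Ew p β = (p:Wt p)^r' * x := by
    apply mul_left_cancel₀ (WittVector.p_nonzero p (Kbar p))
    rw [Ew]
    rw [e1ii, pow_succ]
    ring
  have hET : Ew p T = (p:Wt p)^s' * y := by
    apply mul_left_cancel₀ (WittVector.p_nonzero p (Kbar p))
    rw [Ew]
    rw [e3iv, pow_succ]
    ring
  -- fixed-point equations
  have h2 := congrArg (σW p) e2i
  simp only [map_add, map_mul, map_natCast, map_pow, RingEquiv.apply_symm_apply,
    Nat.succ_eq_add_one] at h2
  have hβform : β = σW p a * (α - σW p α) + (p:Wt p) * (σW p a)^2 * σW p β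
      + (p:Wt p)^(r'+1) * (-(σW p b)) := by
    linear_combination (σW p a) * e1i - h2
  have h4 := congrArg (σW p) e4ii
  simp only [map_add, map_mul, map_natCast, map_pow, RingEquiv.apply_symm_apply,
    Nat.succ_eq_add_one] at h4
  have hTform : T = σW p a * (S - σW p S) + (p:Wt p) * (σW p a)^2 * σW p T
      + (p:Wt p)^(s'+1) * (-(σW p g)) := by
    linear_combination (σW p a) * e3iii - h4
  have huα : σW p (σW p (α - σW p α)) = α - σW p α := by
    rw [map_sub, map_sub, e1i]
  have huS : σW p (σW p (S - σW p S)) = S - σW p S := by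
    rw [map_sub, map_sub, e3iii]
  by_cases ha2 : σW p (σW p a) = a
  · exact (coreB p a (α - σW p α) β (-(σW p b)) x r' ha2 huα hβform hEβ hxr).elim
  · obtain ⟨astar, e, m, hstar, hadec, he⟩ := decomp p a ha2
    obtain ⟨t₁, ht₁, hX⟩ := coreA p a astar e m hstar hadec (α - σW p α) β
      (-(σW p b)) x r' huα hβform hEβ hxr he
    obtain ⟨t₂, ht₂, hY⟩ := coreA p a astar e m hstar hadec (S - σW p S) T
      (-(σW p g)) y s' huS hTform hET hyr he
    have hgoal : (red p x)^(p*p) * red p y = red p x * (red p y)^(p*p) := by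
      rw [hX, hY, mul_pow, mul_pow, ht₁, ht₂]
      ring
    rw [pow_two]
    exact hgoal
end
end

section
/- Let N ≥ 1 and m ≥ 0 be integers, let β₁ ∈ W^×, let u₁ ∈ W^× satisfy σ²(u₁) = u₁, and let a₁, b, x ∈ W be such that σ²(β₁) − β₁ = p^{N−1}x and p^{2m+1}β₁a₁² + u₁a₁ − σ⁻¹(β₁) = p^N b. Then, setting Λ := a₁ − σ⁻¹(β₁)·u₁⁻¹, one has σ²(Λ) ≡ Λ (mod p^N W). -/
noncomputable section

open Pointwise

/-- with `σ²(β₁) − β₁ = p^{N−1}x` and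
`p^{2m+1}β₁a₁² + u₁a₁ − σ⁻¹(β₁) = p^N b`, setting `Λ := a₁ − σ⁻¹(β₁)·u₁⁻¹`,
one has `σ²(Λ) ≡ Λ (mod p^N W)`. -/
theorem statement17 (p : ℕ) [Fact p.Prime] (hp : Odd p)
    (N : ℕ) (hN : 1 ≤ N) (m : ℕ) (β₁ u₁ : Wt p) (hβ₁ : IsUnit β₁) (hu₁ : IsUnit u₁)
    (hu₁σ : σW p (σW p u₁) = u₁) (a₁ b x : Wt p)
    (h1 : σW p (σW p β₁) - β₁ = (p : Wt p) ^ (N - 1) * x)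
    (h2 : (p : Wt p) ^ (2 * m + 1) * β₁ * a₁ ^ 2 + u₁ * a₁ - (σW p).symm β₁
      = (p : Wt p) ^ N * b) :
    (p : Wt p) ^ N ∣
      (σW p (σW p (a₁ - (σW p).symm β₁ * Ring.inverse u₁))
        - (a₁ - (σW p).symm β₁ * Ring.inverse u₁)) := by
  set f := σW p with hf
  -- Transport h2 through σ²
  have h2' := congrArg (fun t => f (f t)) h2
  simp only [map_add, map_sub, map_mul, map_pow, map_natCast, hu₁σ,
    RingEquiv.apply_symm_apply] at h2'
  have hC := congrArg f.symm h1
  simp only [map_sub, map_mul, map_pow, map_natCast, RingEquiv.symm_apply_apply] at hC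
  set P : Wt p := (p : Wt p) with hP
  set q : Wt p := P ^ (N - 1) with hq
  set M : Wt p := P ^ (2 * m) with hM
  have hqP : P ^ N = q * P := by
    rw [hq, ← pow_succ, Nat.sub_add_cancel hN]
  have hMP : P ^ (2 * m + 1) = M * P := by rw [hM, pow_succ]
  set A : Wt p := f (f a₁) with hA
  set B : Wt p := f (f β₁) with hB
  rw [hqP, hMP] at h2 h2'
  -- the unit v
  set v : Wt p := u₁ + M * P * B * (A + a₁) with hv
  have hveq : v * (A - a₁) =
      q * (f.symm x) - M * P * q * x * a₁ ^ 2 + q * P * (f (f b) - b) := by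
    linear_combination h2' - h2 + hC - M * P * a₁ ^ 2 * h1
  -- v is a unit
  have hvunit : IsUnit v := by
    apply WittVector.isUnit_of_coeff_zero_ne_zero
    have h0 : v.coeff 0 = u₁.coeff 0 := by
      have : WittVector.constantCoeff v = WittVector.constantCoeff u₁ := by
        have hp0 : WittVector.constantCoeff P = 0 := by
          rw [hP]
          simp [WittVector.constantCoeff_apply, WittVector.coeff_p_zero]
        simp [hv, map_add, map_mul, hp0]
      simpa [WittVector.constantCoeff_apply] using this
    rw [h0]
    have := (WittVector.constantCoeff : Wt p →+* Kbar p).isUnit_map hu₁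
    rw [WittVector.constantCoeff_apply] at this
    exact this.ne_zero
  -- q divides A - a₁
  have hqd : q ∣ (A - a₁) := by
    have hqv : q ∣ v * (A - a₁) := by
      refine ⟨f.symm x - M * P * x * a₁ ^ 2 + P * (f (f b) - b), ?_⟩
      rw [hveq]; ring
    obtain ⟨t, ht⟩ := hqv
    refine ⟨(Ring.inverse v) * t, ?_⟩
    have hv1 : Ring.inverse v * v = 1 := Ring.inverse_mul_cancel v hvunit
    calc A - a₁ = (Ring.inverse v * v) * (A - a₁) := by rw [hv1, one_mul]
      _ = Ring.inverse v * (v * (A - a₁)) := by ring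
      _ = Ring.inverse v * (q * t) := by rw [ht]
      _ = q * (Ring.inverse v * t) := by ring
  obtain ⟨z, hz⟩ := hqd
  -- inverse of u₁ is fixed by σ²
  have hinv : u₁ * Ring.inverse u₁ = 1 := Ring.mul_inverse_cancel u₁ hu₁
  have hσinv : f (f (Ring.inverse u₁)) = Ring.inverse u₁ := by
    have h := congrArg (fun t => f (f t)) hinv
    simp only [map_mul, map_one, hu₁σ] at h
    have : u₁ * f (f (Ring.inverse u₁)) = u₁ * Ring.inverse u₁ := by rw [h, hinv]
    exact mul_left_cancel₀ hu₁.ne_zero this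
  -- main identity
  have hmain : u₁ * ((f (f (a₁ - (σW p).symm β₁ * Ring.inverse u₁)))
      - (a₁ - (σW p).symm β₁ * Ring.inverse u₁))
      = P ^ N * (M * (-(x * a₁ ^ 2) - B * (A + a₁) * z) + (f (f b) - b)) := by
    have hfΛ : f (f (a₁ - (σW p).symm β₁ * Ring.inverse u₁))
        = A - f β₁ * Ring.inverse u₁ := by
      simp only [map_sub, map_mul, ← hf, RingEquiv.apply_symm_apply, hσinv, hA]
    rw [hfΛ, hqP]
    linear_combination hveq - (M * P * B * (A + a₁)) * hz - hC
      + (f.symm β₁ - f β₁) * hinv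
  -- conclude
  obtain ⟨T, hT⟩ : P ^ N ∣ u₁ * ((f (f (a₁ - (σW p).symm β₁ * Ring.inverse u₁)))
      - (a₁ - (σW p).symm β₁ * Ring.inverse u₁)) := ⟨_, hmain⟩
  refine ⟨Ring.inverse u₁ * T, ?_⟩
  have hiu : Ring.inverse u₁ * u₁ = 1 := Ring.inverse_mul_cancel u₁ hu₁
  calc f (f (a₁ - (σW p).symm β₁ * Ring.inverse u₁))
        - (a₁ - (σW p).symm β₁ * Ring.inverse u₁)
      = (Ring.inverse u₁ * u₁) * (f (f (a₁ - (σW p).symm β₁ * Ring.inverse u₁))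
        - (a₁ - (σW p).symm β₁ * Ring.inverse u₁)) := by rw [hiu, one_mul]
    _ = Ring.inverse u₁ * (u₁ * (f (f (a₁ - (σW p).symm β₁ * Ring.inverse u₁))
        - (a₁ - (σW p).symm β₁ * Ring.inverse u₁))) := by ring
    _ = Ring.inverse u₁ * (P ^ N * T) := by rw [hT]
    _ = P ^ N * (Ring.inverse u₁ * T) := by ring
end
end
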